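/- For all natural numbers n and r, the number of block-separated overpartitions of n whose underlying partition has exactly r distinct part-sizes equals F_{r+2} · d_r(n), where d_r(n) is the number of partitions of n having exactly r distinct part-sizes. -/

import Mathlib

/-!
The inner count depends only on the set `T` of part sizes: a subset `S ⊆ T` is separated iff it
contains no two neighbours of the chain `T`, so we count independent sets of a path. Adding a new
maximum `a` to `T`, the separated subsets avoiding `a` are those of `T`, and those containing `a`
correspond to separated subsets of `T` avoiding the old maximum. Hence the two counts `f` (all
separated subsets) and `g` (those avoiding the maximum) satisfy `f (k+1) = f k + g k` and
`g (k+1) = f k`, which is the Fibonacci recursion.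
-/

/-- The separation condition: no two consecutive distinct part-sizes (i.e. two elements
of `S` with no part-size of `p` strictly between them) are both overlined. -/
def SepCond {n : ℕ} (p : Nat.Partition n) (S : Finset ℕ) : Prop :=
  ∀ d ∈ S, ∀ e ∈ S, d < e → ∃ c ∈ p.parts.toFinset, d < c ∧ c < e

instance {n : ℕ} (p : Nat.Partition n) : DecidablePred (SepCond p) := fun _ =>
  Finset.decidableDforallFinset

/-- `d r n` is the number of partitions of `n` with exactly `r` distinct part-sizes. -/
def d (r n : ℕ) : ℕ :=
  ((Finset.univ : Finset (Nat.Partition n)).filter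
    (fun p => p.parts.toFinset.card = r)).card

open Finset

section Separated

variable {α : Type*} [LinearOrder α]

def IsSeparated (T S : Finset α) : Prop :=
  ∀ x ∈ S, ∀ y ∈ S, x < y → ∃ c ∈ T, x < c ∧ c < y

instance (T : Finset α) : DecidablePred (IsSeparated T) := fun _ =>
  Finset.decidableDforallFinset

variable {a : α} {s t : Finset α}

lemma IsSeparated.mono {T S S' : Finset α} (h : IsSeparated T S) (hS : S' ⊆ S) :
    IsSeparated T S' :=
  fun x hx y hy hxy => h x (hS hx) y (hS hy) hxy

lemma isSeparated_insert_of_lt (ha : ∀ x ∈ s, x < a) (ht : t ⊆ s) :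
    IsSeparated (insert a s) t ↔ IsSeparated s t := by
  refine ⟨fun h x hx y hy hxy => ?_, fun h x hx y hy hxy => ?_⟩
  · obtain ⟨c, hc, hxc, hcy⟩ := h x hx y hy hxy
    have hca : c ≠ a := (hcy.trans (ha y (ht hy))).ne
    exact ⟨c, (mem_insert.mp hc).resolve_left hca, hxc, hcy⟩
  · obtain ⟨c, hc, hxc, hcy⟩ := h x hx y hy hxy
    exact ⟨c, mem_insert_of_mem hc, hxc, hcy⟩

lemma isSeparated_insert_insert_of_lt (ha : ∀ x ∈ s, x < a) (ht : t ⊆ s) :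
    IsSeparated (insert a s) (insert a t) ↔ IsSeparated s t ∧ ∀ x ∈ t, ∃ c ∈ s, x < c := by
  constructor
  · intro h
    refine ⟨(isSeparated_insert_of_lt ha ht).mp (h.mono (subset_insert a t)), fun x hx => ?_⟩
    obtain ⟨c, hc, hxc, hca⟩ := h x (mem_insert_of_mem hx) a (mem_insert_self a t) (ha x (ht hx))
    exact ⟨c, (mem_insert.mp hc).resolve_left hca.ne, hxc⟩
  · rintro ⟨hsep, hdom⟩ x hx y hy hxy
    rcases mem_insert.mp hx with rfl | hxt
    · rcases mem_insert.mp hy with rfl | hyt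
      · exact absurd hxy (lt_irrefl _)
      · exact absurd hxy (ha y (ht hyt)).not_gt
    · rcases mem_insert.mp hy with rfl | hyt
      · obtain ⟨c, hc, hxc⟩ := hdom x hxt
        exact ⟨c, mem_insert_of_mem hc, hxc, ha c hc⟩
      · obtain ⟨c, hc, hxc, hcy⟩ := hsep x hxt y hyt hxy
        exact ⟨c, mem_insert_of_mem hc, hxc, hcy⟩

lemma card_isSeparated_insert (ha : ∀ x ∈ s, x < a) :
    #{t ∈ (insert a s).powerset | IsSeparated (insert a s) t} =
      #{t ∈ s.powerset | IsSeparated s t} +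
        #{t ∈ s.powerset | IsSeparated s t ∧ ∀ x ∈ t, ∃ c ∈ s, x < c} := by
  simp only [card_filter]
  rw [sum_powerset_insert fun has => lt_irrefl a (ha a has)]
  congr 1 <;> refine sum_congr rfl fun t ht => ?_
  · simp only [isSeparated_insert_of_lt ha (mem_powerset.mp ht)]
  · simp only [isSeparated_insert_insert_of_lt ha (mem_powerset.mp ht)]

lemma card_isSeparated_dominated_insert (ha : ∀ x ∈ s, x < a) :
    #{t ∈ (insert a s).powerset |
        IsSeparated (insert a s) t ∧ ∀ x ∈ t, ∃ c ∈ insert a s, x < c} =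
      #{t ∈ s.powerset | IsSeparated s t} := by
  simp only [card_filter]
  rw [sum_powerset_insert fun has => lt_irrefl a (ha a has)]
  have top_not_dominated : ∀ t : Finset α, ¬ ∀ x ∈ insert a t, ∃ c ∈ insert a s, x < c := by
    intro t h
    obtain ⟨c, hc, hac⟩ := h a (mem_insert_self a t)
    rcases mem_insert.mp hc with rfl | hc
    · exact lt_irrefl c hac
    · exact lt_asymm hac (ha c hc)
  have dominated (t : Finset α) (ht : t ⊆ s) : ∀ x ∈ t, ∃ c ∈ insert a s, x < c :=
    fun x hx => ⟨a, mem_insert_self a s, ha x (ht hx)⟩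
  simp only [top_not_dominated, and_false, if_false, sum_const_zero, add_zero]
  refine sum_congr rfl fun t ht => ?_
  have hts := mem_powerset.mp ht
  simp only [isSeparated_insert_of_lt ha hts, eq_true (dominated t hts), and_true]

theorem card_isSeparated_powerset (T : Finset α) :
    #{S ∈ T.powerset | IsSeparated T S} = Nat.fib (#T + 2) := by
  suffices #{S ∈ T.powerset | IsSeparated T S} = Nat.fib (#T + 2) ∧
      #{S ∈ T.powerset | IsSeparated T S ∧ ∀ x ∈ S, ∃ c ∈ T, x < c} = Nat.fib (#T + 1) from
    this.1
  induction T using Finset.induction_on_max with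
  | empty => simp [IsSeparated, filter_singleton]
  | insert a s ha ih =>
    rw [card_isSeparated_insert ha, card_isSeparated_dominated_insert ha, ih.1, ih.2,
      card_insert_of_notMem fun has => lt_irrefl a (ha a has)]
    exact ⟨(Nat.fib_add_two.trans (add_comm _ _)).symm, rfl⟩

end Separated

/-- The number of block-separated overpartitions of `n` whose underlying partition has
exactly `r` distinct part-sizes equals `F_{r+2} · d_r(n)`, where `F` is the Fibonacci
sequence with `F 1 = F 2 = 1`. -/
theorem card_blockSep_fixed_r (n r : ℕ) :
    (∑ p ∈ (Finset.univ : Finset (Nat.Partition n)).filter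
        (fun p => p.parts.toFinset.card = r),
      (p.parts.toFinset.powerset.filter (fun S => SepCond p S)).card)
      = Nat.fib (r + 2) * d r n := by
  rw [d, mul_comm]
  refine sum_const_nat fun p hp => ?_
  rw [← (mem_filter.mp hp).2]
  exact card_isSeparated_powerset p.parts.toFinset
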